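/- Let R be a ring with a group G acting by ring automorphisms, and suppose R is G-prime (the zero ideal is G-prime). If the set of minimal prime ideals of R is finite and nonempty, then G acts transitively on the set of minimal primes of R. Equivalently: the minimal primes of a G-prime ring with finitely many minimal primes form a single G-orbit. -/

import Mathlib

open Pointwise

/-- A two-sided ideal of a (possibly noncommutative) ring, as a subset. -/
structure IsTwoSidedIdealSet (R : Type*) [Ring R] (I : Set R) : Prop where
  zero_mem : (0 : R) ∈ I
  add_mem : ∀ ⦃a b : R⦄, a ∈ I → b ∈ I → a + b ∈ I
  neg_mem : ∀ ⦃a : R⦄, a ∈ I → -a ∈ I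
  mul_mem_left : ∀ (r : R) ⦃a : R⦄, a ∈ I → r * a ∈ I
  mul_mem_right : ∀ (r : R) ⦃a : R⦄, a ∈ I → a * r ∈ I

/-- A prime two-sided ideal: proper, and `A*B ⊆ P` for two-sided ideals `A, B`
implies `A ⊆ P` or `B ⊆ P`.  (Note `A*B ⊆ P` is equivalent to
`∀ a ∈ A, ∀ b ∈ B, a*b ∈ P` since `P` is closed under addition.) -/
def IsPrimeTI (R : Type*) [Ring R] (P : Set R) : Prop :=
  IsTwoSidedIdealSet R P ∧ P ≠ Set.univ ∧
    ∀ A B : Set R, IsTwoSidedIdealSet R A → IsTwoSidedIdealSet R B →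
      (∀ a ∈ A, ∀ b ∈ B, a * b ∈ P) → A ⊆ P ∨ B ⊆ P

/-- A `G`-prime ideal: a proper `G`-stable two-sided ideal `I` such that
`A*B ⊆ I` for `G`-stable two-sided ideals `A, B` implies `A ⊆ I` or `B ⊆ I`. -/
def IsGPrime (G R : Type*) [Group G] [Ring R] [MulSemiringAction G R] (I : Set R) : Prop :=
  IsTwoSidedIdealSet R I ∧ I ≠ Set.univ ∧ (∀ g : G, g • I = I) ∧
    ∀ A B : Set R, IsTwoSidedIdealSet R A → IsTwoSidedIdealSet R B →
      (∀ g : G, g • A = A) → (∀ g : G, g • B = B) →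
      (∀ a ∈ A, ∀ b ∈ B, a * b ∈ I) → A ⊆ I ∨ B ⊆ I


/-- The set of minimal prime two-sided ideals of `R`. -/
def MinPrimesTI (R : Type*) [Ring R] : Set (Set R) :=
  {P | IsPrimeTI R P ∧ ∀ P' : Set R, IsPrimeTI R P' → P' ⊆ P → P' = P}

/-! The intersection `A` of the minimal primes in the `G`-orbit of `P` and the intersection `B` of
the remaining minimal primes are `G`-stable ideals with `A * B ⊆ ⋂ (minimal primes) = 0`, so by
`G`-primeness `A = 0` or `B = 0`. A prime containing a finite intersection of ideals contains one
of them, so by minimality every minimal prime `P'` lies in the orbit if `A = 0`, while `B = 0`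
would force `P` itself outside its own orbit. -/

open MulAction Set

section

variable {G R : Type*} [Group G] [Ring R]

section FixedBlock

variable {X : Type*} [MulAction G X]

lemma MulAction.IsFixedBlock.sdiff {S T : Set X} (hS : IsFixedBlock G S) (hT : IsFixedBlock G T) :
    IsFixedBlock G (S \ T) := fun g => by
  rw [smul_set_sdiff, hS g, hT g]

lemma MulAction.IsFixedBlock.sInter {S : Set (Set X)} (hS : IsFixedBlock G S) :
    IsFixedBlock G (⋂₀ S) := fun g =>
  calc g • ⋂₀ S = ⋂ s ∈ S, g • s := by simp only [sInter_eq_biInter, smul_set_iInter]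
    _ = ⋂₀ (g • S) := (sInter_image _ _).symm
    _ = ⋂₀ S := by rw [hS g]

end FixedBlock

namespace IsTwoSidedIdealSet

lemma sInter {S : Set (Set R)} (h : ∀ Q ∈ S, IsTwoSidedIdealSet R Q) :
    IsTwoSidedIdealSet R (⋂₀ S) where
  zero_mem := mem_sInter.2 fun Q hQ => (h Q hQ).zero_mem
  add_mem _ _ ha hb := mem_sInter.2 fun Q hQ => (h Q hQ).add_mem (ha Q hQ) (hb Q hQ)
  neg_mem _ ha := mem_sInter.2 fun Q hQ => (h Q hQ).neg_mem (ha Q hQ)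
  mul_mem_left r _ ha := mem_sInter.2 fun Q hQ => (h Q hQ).mul_mem_left r (ha Q hQ)
  mul_mem_right r _ ha := mem_sInter.2 fun Q hQ => (h Q hQ).mul_mem_right r (ha Q hQ)

variable [MulSemiringAction G R]

lemma smul {I : Set R} (h : IsTwoSidedIdealSet R I) (g : G) : IsTwoSidedIdealSet R (g • I) where
  zero_mem := ⟨0, h.zero_mem, smul_zero g⟩
  add_mem := by
    rintro _ _ ⟨a, ha, rfl⟩ ⟨b, hb, rfl⟩
    exact ⟨a + b, h.add_mem ha hb, smul_add g a b⟩
  neg_mem := by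
    rintro _ ⟨a, ha, rfl⟩
    exact ⟨-a, h.neg_mem ha, smul_neg g a⟩
  mul_mem_left r := by
    rintro _ ⟨a, ha, rfl⟩
    exact ⟨g⁻¹ • r * a, h.mul_mem_left _ ha, by simp only [smul_mul', smul_inv_smul]⟩
  mul_mem_right r := by
    rintro _ ⟨a, ha, rfl⟩
    exact ⟨a * g⁻¹ • r, h.mul_mem_right _ ha, by simp only [smul_mul', smul_inv_smul]⟩

end IsTwoSidedIdealSet

lemma IsPrimeTI.smul [MulSemiringAction G R] {P : Set R} (h : IsPrimeTI R P) (g : G) :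
    IsPrimeTI R (g • P) := by
  obtain ⟨hP, hne, hprime⟩ := h
  refine ⟨hP.smul g, by rwa [Ne, smul_set_eq_univ], fun A B hA hB hAB => ?_⟩
  have hAB' : ∀ a ∈ g⁻¹ • A, ∀ b ∈ g⁻¹ • B, a * b ∈ P := by
    rintro _ ⟨a, ha, rfl⟩ _ ⟨b, hb, rfl⟩
    obtain ⟨p, hp, hpab⟩ := hAB a ha b hb
    rwa [← smul_mul', ← hpab, inv_smul_smul]
  simpa only [subset_smul_set_iff] using hprime _ _ (hA.smul g⁻¹) (hB.smul g⁻¹) hAB'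

lemma IsPrimeTI.exists_subset_of_sInter_subset {P : Set R} (hP : IsPrimeTI R P)
    {S : Set (Set R)} (hfin : S.Finite) (hS : ∀ Q ∈ S, IsTwoSidedIdealSet R Q)
    (hsub : ⋂₀ S ⊆ P) : ∃ Q ∈ S, Q ⊆ P := by
  induction S, hfin using Set.Finite.induction_on with
  | empty => exact absurd (univ_subset_iff.1 (by simpa using hsub)) hP.2.1
  | @insert Q S _ _ ih =>
    have hQ := hS Q (mem_insert _ _)
    have hS' : ∀ Q' ∈ S, IsTwoSidedIdealSet R Q' := fun Q' h => hS Q' (mem_insert_of_mem _ h)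
    have hmul : ∀ a ∈ Q, ∀ b ∈ ⋂₀ S, a * b ∈ P := fun a ha b hb =>
      hsub <| sInter_insert Q S ▸
        ⟨hQ.mul_mem_right b ha, (IsTwoSidedIdealSet.sInter hS').mul_mem_left a hb⟩
    rcases hP.2.2 Q (⋂₀ S) hQ (.sInter hS') hmul with hQP | hSP
    · exact ⟨Q, mem_insert _ _, hQP⟩
    · obtain ⟨Q', hQ', hQ'P⟩ := ih hS' hSP
      exact ⟨Q', mem_insert_of_mem _ hQ', hQ'P⟩

lemma smul_mem_minPrimesTI [MulSemiringAction G R] {P : Set R} (h : P ∈ MinPrimesTI R) (g : G) :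
    g • P ∈ MinPrimesTI R := by
  refine ⟨h.1.smul g, fun P' hP' hsub => ?_⟩
  rw [← smul_inv_smul g P', h.2 _ (hP'.smul g⁻¹) (subset_smul_set_iff.1 hsub)]

lemma isFixedBlock_minPrimesTI [MulSemiringAction G R] : IsFixedBlock G (MinPrimesTI R) :=
  isInvariantBlock_iff_isFixedBlock.1 fun g => by
    rintro _ ⟨P, hP, rfl⟩
    exact smul_mem_minPrimesTI hP g

lemma mem_of_sInter_subset_of_mem_minPrimesTI {S : Set (Set R)} (hS : S ⊆ MinPrimesTI R)
    (hfin : S.Finite) {P : Set R} (hP : P ∈ MinPrimesTI R) (hsub : ⋂₀ S ⊆ P) : P ∈ S := by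
  obtain ⟨Q, hQS, hQP⟩ :=
    hP.1.exists_subset_of_sInter_subset hfin (fun Q hQ => (hS hQ).1.1) hsub
  rwa [← hP.2 Q (hS hQS).1 hQP]

lemma IsGPrime.sInter_subset_or_sInter_subset [MulSemiringAction G R] {I : Set R}
    (hI : IsGPrime G R I) {S T : Set (Set R)} (hS : ∀ Q ∈ S, IsTwoSidedIdealSet R Q)
    (hT : ∀ Q ∈ T, IsTwoSidedIdealSet R Q) (hSfix : IsFixedBlock G S)
    (hTfix : IsFixedBlock G T) (hsub : ⋂₀ (S ∪ T) ⊆ I) : ⋂₀ S ⊆ I ∨ ⋂₀ T ⊆ I := by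
  refine hI.2.2.2 _ _ (.sInter hS) (.sInter hT) hSfix.sInter hTfix.sInter
    fun a ha b hb => hsub <| mem_sInter.2 fun Q hQ => ?_
  rcases hQ with hQS | hQT
  · exact (hS Q hQS).mul_mem_right b (ha Q hQS)
  · exact (hT Q hQT).mul_mem_left a (hb Q hQT)

end

theorem minPrimes_single_orbit_general {G R : Type*} [Group G] [Ring R] [MulSemiringAction G R]
    (hGprime : IsGPrime G R ({0} : Set R))
    (hfin : (MinPrimesTI R).Finite)
    (hsemi : ⋂₀ MinPrimesTI R = ({0} : Set R)) :
    ∀ P ∈ MinPrimesTI R, ∀ P' ∈ MinPrimesTI R, ∃ g : G, g • P = P' := by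
  intro P hP P' hP'
  have horbit : orbit G P ⊆ MinPrimesTI R := by
    rintro _ ⟨g, rfl⟩
    exact smul_mem_minPrimesTI hP g
  have hzero : ⋂₀ (orbit G P ∪ (MinPrimesTI R \ orbit G P)) ⊆ {0} := by
    rw [union_sdiff_cancel horbit, hsemi]
  have hideal : ∀ Q ∈ MinPrimesTI R, IsTwoSidedIdealSet R Q := fun Q hQ => hQ.1.1
  rcases hGprime.sInter_subset_or_sInter_subset (fun Q hQ => hideal Q (horbit hQ))
      (fun Q hQ => hideal Q hQ.1) (IsFixedBlock.orbit P)
      (isFixedBlock_minPrimesTI.sdiff (IsFixedBlock.orbit P)) hzero with hO | hC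
  · exact mem_of_sInter_subset_of_mem_minPrimesTI horbit (hfin.subset horbit) hP'
      (hO.trans (singleton_subset_iff.2 (hideal P' hP').zero_mem))
  · have hPC := mem_of_sInter_subset_of_mem_minPrimesTI sdiff_subset (hfin.subset sdiff_subset) hP
      (hC.trans (singleton_subset_iff.2 (hideal P hP).zero_mem))
    exact absurd (mem_orbit_self P) hPC.2

/-- let `R` be a `G`-prime ring (the zero ideal is `G`-prime)
which is semiprime with finitely many (and at least one) minimal primes, so
that the intersection of the minimal primes is zero.  Then `G` permutes the
minimal primes of `R` transitively: they form a single `G`-orbit. -/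
theorem minPrimes_single_orbit {G R : Type*} [Group G] [Ring R] [MulSemiringAction G R]
    (hGprime : IsGPrime G R ({0} : Set R))
    (hfin : (MinPrimesTI R).Finite) (hne : (MinPrimesTI R).Nonempty)
    (hsemi : ⋂₀ MinPrimesTI R = ({0} : Set R)) :
    ∀ P ∈ MinPrimesTI R, ∀ P' ∈ MinPrimesTI R, ∃ g : G, g • P = P' :=
  minPrimes_single_orbit_general hGprime hfin hsemi
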